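/- Define expit(x) = eˣ/(1 + eˣ). Let V : ℝᴷ → ℝ be bounded above by V* ∈ ℝ, let b ∈ ℝᴷ, let λ > 0, and define J(β) = V(β) − λ·‖β − b‖₁. Let B ≥ 0 and suppose β★ maximizes J over ℝᴷ. Then there exists ε > 0 (one may take ε = expit(−(‖b‖₁ + (V* − V(b))/λ)·B)) such that for every state s ∈ ℝᴷ with ‖s‖_∞ ≤ B, ε ≤ expit(⟨β★, s⟩) ≤ 1 − ε. That is, the policy π_{β★}(A = 1 | S = s) = expit(⟨β★, s⟩) parameterized by any maximizer of the relative-sparsity-penalized value is stochastic, with treatment probabilities uniformly bounded away from 0 and 1 on bounded states. -/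
import Mathlib


/-- The expit (logistic) function. -/
noncomputable def expit (x : ℝ) : ℝ := Real.exp x / (1 + Real.exp x)

lemma expit_pos (x : ℝ) : 0 < expit x := by
  unfold expit
  have := Real.exp_pos x
  positivity

lemma expit_mono {x y : ℝ} (h : x ≤ y) : expit x ≤ expit y := by
  unfold expit
  have hx := Real.exp_pos x
  have hy := Real.exp_pos y
  rw [div_le_div_iff₀ (by linarith) (by linarith)]
  have := Real.exp_le_exp.mpr h
  nlinarith

lemma expit_neg (x : ℝ) : expit (-x) = 1 - expit x := by
  unfold expit
  have hx := Real.exp_pos x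
  rw [Real.exp_neg]
  field_simp
  ring

/-- The policy parameterized by any maximizer of the relative-sparsity-penalized
value is stochastic, with treatment probabilities uniformly bounded away from `0`
and `1` on bounded states. -/
theorem maximizer_policy_stochastic {K : ℕ}
    (V : (Fin K → ℝ) → ℝ) (Vstar : ℝ) (hV : ∀ β, V β ≤ Vstar)
    (b : Fin K → ℝ) (lam : ℝ) (hlam : 0 < lam) (B : ℝ) (hB : 0 ≤ B)
    (βstar : Fin K → ℝ)
    (hmax : ∀ β, V β - lam * (∑ k, |β k - b k|) ≤
      V βstar - lam * (∑ k, |βstar k - b k|)) :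
    ∃ ε > 0, ∀ s : Fin K → ℝ, (∀ k, |s k| ≤ B) →
      ε ≤ expit (∑ k, βstar k * s k) ∧ expit (∑ k, βstar k * s k) ≤ 1 - ε := by
  set M : ℝ := (∑ k, |b k|) + (Vstar - V b) / lam with hM
  -- bound on ∑ |βstar k - b k|
  have hkey : ∑ k, |βstar k - b k| ≤ (Vstar - V b) / lam := by
    have h := hmax b
    simp only [sub_self, abs_zero, Finset.sum_const_zero, mul_zero, sub_zero] at h
    have h2 : lam * (∑ k, |βstar k - b k|) ≤ Vstar - V b := by
      have := hV βstar; linarith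
    rw [le_div_iff₀ hlam, mul_comm]
    exact h2
  have hβ : ∑ k, |βstar k| ≤ M := by
    have : ∑ k, |βstar k| ≤ ∑ k, (|b k| + |βstar k - b k|) := by
      apply Finset.sum_le_sum
      intro k _
      have := abs_add_le (b k) (βstar k - b k)
      simpa using this
    rw [Finset.sum_add_distrib] at this
    rw [hM]
    linarith
  have hMnn : 0 ≤ M := le_trans (Finset.sum_nonneg fun k _ => abs_nonneg _) hβ
  refine ⟨expit (-(M * B)), expit_pos _, fun s hs => ?_⟩
  have hbound : |∑ k, βstar k * s k| ≤ M * B := by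
    calc |∑ k, βstar k * s k| ≤ ∑ k, |βstar k * s k| := Finset.abs_sum_le_sum_abs _ _
      _ ≤ ∑ k, |βstar k| * B := by
          apply Finset.sum_le_sum
          intro k _
          rw [abs_mul]
          exact mul_le_mul_of_nonneg_left (hs k) (abs_nonneg _)
      _ = (∑ k, |βstar k|) * B := (Finset.sum_mul _ _ _).symm
      _ ≤ M * B := mul_le_mul_of_nonneg_right hβ hB
  have h1 : -(M * B) ≤ ∑ k, βstar k * s k := neg_le_of_abs_le hbound
  have h2 : ∑ k, βstar k * s k ≤ M * B := le_of_abs_le hbound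
  constructor
  · exact expit_mono h1
  · have : expit (∑ k, βstar k * s k) ≤ expit (M * B) := expit_mono h2
    have hne : expit (M * B) = 1 - expit (-(M * B)) := by
      rw [expit_neg, sub_sub_cancel]
    linarith
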